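/- Comparison of group and population mean imputation (Theorem 2): the group reconstruction error from group mean imputation is larger than that from population mean imputation, i.e. L_g^{group} > L_g^{pop}, if and only if either ρ_g / √(α_g(1−α_g)) < (μ_g^O − μ^O)/(2σ_{X|G}) < 0, or 0 < (μ_g^O − μ^O)/(2σ_{X|G}) < ρ_g / √(α_g(1−α_g)). -/

import Mathlib

/-!
Imputing a constant `c` for the unobserved members of group `g` costs
`(c - m₀)² + Var(X | O = 0, G)`, where `m₀ = E[X | O = 0, G]`; so group mean imputation loses
exactly when `(μ_g^O - m₀)² > (μ^O - m₀)²`. Under `μ(· | G)` the covariance of the indicator `O`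
with `X` is `α_g (1 - α_g) (μ_g^O - m₀)`, hence `ρ_g / √(α_g (1 - α_g)) = (μ_g^O - m₀) / σ_{X|G}`.
With `t = (μ_g^O - μ^O) / (2σ_{X|G})` and `s = (μ_g^O - m₀) / σ_{X|G}` the loss comparison reads
`0 < t (s - t)`, i.e. `t` lies strictly between `0` and `s`.
-/

open MeasureTheory ProbabilityTheory

/-- Covariance of two real random variables under the measure `μ`. -/
noncomputable def condCov {Ω : Type*} [MeasurableSpace Ω] (μ : Measure Ω) (O X : Ω → ℝ) : ℝ :=
  ∫ ω, (O ω - ∫ x, O x ∂μ) * (X ω - ∫ x, X x ∂μ) ∂μ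

lemma pos_mul_sub_iff {s t : ℝ} : 0 < t * (s - t) ↔ (s < t ∧ t < 0) ∨ (0 < t ∧ t < s) := by
  rw [mul_pos_iff, sub_pos, sub_neg]
  tauto

lemma sq_sub_lt_sq_sub_iff {p u m σ : ℝ} (hσ : 0 < σ) :
    (u - m) ^ 2 < (p - m) ^ 2 ↔ 0 < (p - u) / (2 * σ) * ((p - m) / σ - (p - u) / (2 * σ)) := by
  have key : (p - u) / (2 * σ) * ((p - m) / σ - (p - u) / (2 * σ)) =
      ((p - m) ^ 2 - (u - m) ^ 2) / (4 * σ ^ 2) := by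
    field_simp
    ring
  rw [key, div_pos_iff_of_pos_right (by positivity), sub_pos]

section Probability

variable {Ω : Type*} [MeasurableSpace Ω] {μ : Measure Ω} {s : Set Ω}

lemma MeasureTheory.MemLp.cond {ε : Type*} [TopologicalSpace ε] [ContinuousENorm ε] {f : Ω → ε}
    {p : ENNReal} (hf : MemLp f p μ) (hs : μ s ≠ 0) :
    MemLp f p μ[|s] :=
  hf.restrict s |>.smul_measure (ENNReal.inv_ne_top.2 hs)

lemma measureReal_mul_integral_cond [IsFiniteMeasure μ] (f : Ω → ℝ) :
    μ.real s * ∫ x, f x ∂μ[|s] = ∫ x in s, f x ∂μ := by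
  rcases eq_or_ne (μ s) 0 with hs | hs
  · simp [Measure.restrict_eq_zero.2 hs, measureReal_def, hs]
  · rw [ProbabilityTheory.cond, integral_smul_measure, smul_eq_mul, ← mul_assoc, measureReal_def,
      ← ENNReal.toReal_mul, ENNReal.mul_inv_cancel hs (measure_ne_top μ s), ENNReal.toReal_one,
      one_mul]

lemma integral_sq_const_sub [IsProbabilityMeasure μ] {X : Ω → ℝ} (hX : MemLp X 2 μ) (c : ℝ) :
    ∫ ω, (c - X ω) ^ 2 ∂μ = (c - μ[X]) ^ 2 + Var[X; μ] := by
  have hcX : MemLp (fun ω ↦ c - X ω) 2 μ := (memLp_const c).sub hX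
  rw [← variance_const_sub hX.aestronglyMeasurable c, variance_eq_sub hcX,
    integral_sub (integrable_const c) (hX.integrable one_le_two), integral_const, probReal_univ,
    one_smul]
  simp

lemma covariance_indicator_one_left [IsProbabilityMeasure μ] (hs : MeasurableSet s) {X : Ω → ℝ}
    (hX : MemLp X 2 μ) :
    cov[s.indicator 1, X; μ] =
      μ.real s * (1 - μ.real s) * (∫ ω, X ω ∂μ[|s] - ∫ ω, X ω ∂μ[|sᶜ]) := by
  have hXi : Integrable X μ := hX.integrable one_le_two
  have h1 : MemLp (s.indicator (1 : Ω → ℝ)) 2 μ := (memLp_const 1).indicator hs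
  have hprod : s.indicator 1 * X = s.indicator X := by
    ext ω
    simp [← Set.indicator_mul_left]
  rw [covariance_eq_sub h1 hX, hprod, integral_indicator hs,
    integral_indicator_one hs, ← integral_add_compl hs hXi, ← measureReal_mul_integral_cond,
    ← measureReal_mul_integral_cond, probReal_compl_eq_one_sub hs]
  ring

end Probability

theorem group_vs_population_mean_imputation_general
    {Ω : Type*} [MeasurableSpace Ω] (μ : Measure Ω) [IsProbabilityMeasure μ]
    (X O : Ω → ℝ) (G : Set Ω)
    (hOm : Measurable O) (hG : MeasurableSet G)
    (hX2 : MemLp X 2 μ)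
    (hO01 : ∀ ω, O ω = 0 ∨ O ω = 1)
    (αg σXG ρg μgO μO : ℝ)
    (hαg : αg = ∫ ω, O ω ∂(μ[|G]))
    (hρg : ρg = condCov (μ[|G]) O X / (Real.sqrt (αg * (1 - αg)) * σXG))
    (hμgO : μgO = ∫ ω, X ω ∂(μ[|O ⁻¹' {1} ∩ G]))
    (hα0 : 0 < αg) (hα1 : αg < 1) (hσpos : 0 < σXG) :
    (∫ ω, (μgO - X ω) ^ 2 ∂(μ[|O ⁻¹' {0} ∩ G])) >
        (∫ ω, (μO - X ω) ^ 2 ∂(μ[|O ⁻¹' {0} ∩ G])) ↔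
      (ρg / Real.sqrt (αg * (1 - αg)) < (μgO - μO) / (2 * σXG) ∧
        (μgO - μO) / (2 * σXG) < 0) ∨
      (0 < (μgO - μO) / (2 * σXG) ∧
        (μgO - μO) / (2 * σXG) < ρg / Real.sqrt (αg * (1 - αg))) := by
  set S := O ⁻¹' {1}
  have hS : MeasurableSet S := hOm (measurableSet_singleton 1)
  have hO : O = S.indicator 1 := by
    ext ω
    rcases hO01 ω with h | h <;> simp [S, h]
  have hS0 : O ⁻¹' {0} = Sᶜ := by
    ext ω
    rcases hO01 ω with h | h <;> simp [S, h]
  have hμG : μ G ≠ 0 := fun h ↦ by simp [cond_eq_zero_of_meas_eq_zero h] at hαg; linarith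
  set ν := μ[|G]
  have : IsProbabilityMeasure ν := cond_isProbabilityMeasure hμG
  have hα : αg = ν.real S := by rw [hαg, hO, integral_indicator_one hS]
  have hνSc : ν Sᶜ ≠ 0 := by
    rw [← measureReal_ne_zero_iff, probReal_compl_eq_one_sub hS, ← hα]
    linarith
  have hXν : MemLp X 2 ν := hX2.cond hμG
  have : IsProbabilityMeasure ν[|Sᶜ] := cond_isProbabilityMeasure hνSc
  set m₀ := ∫ ω, X ω ∂ν[|Sᶜ]
  have hcov : condCov ν O X = αg * (1 - αg) * (μgO - m₀) := by
    rw [show condCov ν O X = cov[O, X; ν] from rfl, hO, covariance_indicator_one_left hS hXν,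
      ← hα, hμgO, Set.inter_comm, ← cond_cond_eq_cond_inter hG hS]
  have hratio : ρg / Real.sqrt (αg * (1 - αg)) = (μgO - m₀) / σXG := by
    have hvar : 0 < αg * (1 - αg) := mul_pos hα0 (by linarith)
    have hsqrt := Real.sq_sqrt hvar.le
    rw [hρg, hcov]
    field_simp
    rw [hsqrt]
    ring
  rw [hS0, Set.inter_comm, ← cond_cond_eq_cond_inter hG hS.compl, gt_iff_lt,
    integral_sq_const_sub (hXν.cond hνSc), integral_sq_const_sub (hXν.cond hνSc),
    add_lt_add_iff_right, sq_sub_lt_sq_sub_iff hσpos, hratio]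
  exact pos_mul_sub_iff

/-- (Theorem 2.) `L_g^group > L_g^pop` iff either
`ρ_g/√(α_g(1−α_g)) < (μ_g^O − μ^O)/(2σ_{X|G}) < 0` or
`0 < (μ_g^O − μ^O)/(2σ_{X|G}) < ρ_g/√(α_g(1−α_g))`. -/
theorem group_vs_population_mean_imputation
    {Ω : Type*} [MeasurableSpace Ω] (μ : Measure Ω) [IsProbabilityMeasure μ]
    (X O : Ω → ℝ) (G : Set Ω)
    (hXm : Measurable X) (hOm : Measurable O) (hG : MeasurableSet G)
    (hX2 : MemLp X 2 μ)
    (hO01 : ∀ ω, O ω = 0 ∨ O ω = 1)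
    (αg σXG ρg μgO μO : ℝ)
    (hαg : αg = ∫ ω, O ω ∂(μ[|G]))
    (hσXG : σXG = Real.sqrt (variance X (μ[|G])))
    (hρg : ρg = condCov (μ[|G]) O X / (Real.sqrt (αg * (1 - αg)) * σXG))
    (hμgO : μgO = ∫ ω, X ω ∂(μ[|O ⁻¹' {1} ∩ G]))
    (hμO : μO = ∫ ω, X ω ∂(μ[|O ⁻¹' {1}]))
    (hα0 : 0 < αg) (hα1 : αg < 1) (hσpos : 0 < σXG)
    (hpos1 : 0 < μ (O ⁻¹' {1} ∩ G)) (hpos0 : 0 < μ (O ⁻¹' {0} ∩ G))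
    (hpos1' : 0 < μ (O ⁻¹' {1})) :
    (∫ ω, (μgO - X ω) ^ 2 ∂(μ[|O ⁻¹' {0} ∩ G])) >
        (∫ ω, (μO - X ω) ^ 2 ∂(μ[|O ⁻¹' {0} ∩ G])) ↔
      (ρg / Real.sqrt (αg * (1 - αg)) < (μgO - μO) / (2 * σXG) ∧
        (μgO - μO) / (2 * σXG) < 0) ∨
      (0 < (μgO - μO) / (2 * σXG) ∧
        (μgO - μO) / (2 * σXG) < ρg / Real.sqrt (αg * (1 - αg))) :=
  group_vs_population_mean_imputation_general μ X O G hOm hG hX2 hO01 αg σXG ρg μgO μO hαg hρg hμgO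
    hα0 hα1 hσpos
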